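/- Confluence of the substitution subcalculus: the reflexive-transitive rewrite relation generated by the reading and merging rules of the suspension calculus is confluent on well-formed expressions; in particular every well-formed suspension expression has a unique normal form with respect to these rules. -/

import Mathlib

/- Terms of the suspension calculus: constants, de Bruijn indices `#i`,
applications, abstractions, and suspensions `[t, ol, nl, e]`. -/
mutual
inductive Tm : Type where
  | const : Nat → Tm
  | idx : Nat → Tm
  | app : Tm → Tm → Tm
  | lam : Tm → Tm
  | susp : Tm → Nat → Nat → Env → Tm
/-- Environments: `nil`, cons cells `(t,n)::e`, and merges `{e1, nl1, ol2, e2}`. -/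
inductive Env : Type where
  | nil : Env
  | econs : Tm → Nat → Env → Env
  | merge : Env → Nat → Nat → Env → Env
end

/-- Length of an environment. -/
def Env.len : Env → Nat
  | .nil => 0
  | .econs _ _ e => 1 + Env.len e
  | .merge e1 nl1 _ e2 => Env.len e1 + (Env.len e2 - nl1)

/-- Level of an environment. -/
def Env.lev : Env → Nat
  | .nil => 0
  | .econs _ l _ => l
  | .merge _ nl1 ol2 e2 => Env.lev e2 + (nl1 - ol2)

/- Well-formedness of suspension expressions. -/
mutual
inductive WfTm : Tm → Prop where
  | const : ∀ c, WfTm (.const c)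
  | idx : ∀ i, 1 ≤ i → WfTm (.idx i)
  | app : ∀ {t1 t2}, WfTm t1 → WfTm t2 → WfTm (.app t1 t2)
  | lam : ∀ {t}, WfTm t → WfTm (.lam t)
  | susp : ∀ {t e} (ol nl : Nat), WfTm t → WfEnv e → Env.len e = ol →
      Env.lev e ≤ nl → WfTm (.susp t ol nl e)
inductive WfEnv : Env → Prop where
  | nil : WfEnv .nil
  | econs : ∀ {t e} (l : Nat), WfTm t → WfEnv e → Env.lev e ≤ l → WfEnv (.econs t l e)
  | merge : ∀ {e1 e2} (nl1 ol2 : Nat), WfEnv e1 → WfEnv e2 → Env.lev e1 ≤ nl1 →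
      Env.len e2 = ol2 → WfEnv (.merge e1 nl1 ol2 e2)
end

/- One-step rewriting by the reading rules (r1)-(r6) and merging rules
(m1)-(m6), applied at any subexpression. -/
mutual
inductive SR : Tm → Tm → Prop where
  | r1 : ∀ c ol nl e, SR (.susp (.const c) ol nl e) (.const c)
  | r2 : ∀ i nl, 1 ≤ i → SR (.susp (.idx i) 0 nl .nil) (.idx (i + nl))
  | r3 : ∀ ol nl t l e, SR (.susp (.idx 1) ol nl (.econs t l e)) (.susp t 0 (nl - l) .nil)
  | r4 : ∀ i ol nl t l e, 1 < i →
      SR (.susp (.idx i) ol nl (.econs t l e)) (.susp (.idx (i - 1)) (ol - 1) nl e)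
  | r5 : ∀ t1 t2 ol nl e,
      SR (.susp (.app t1 t2) ol nl e) (.app (.susp t1 ol nl e) (.susp t2 ol nl e))
  | r6 : ∀ t ol nl e,
      SR (.susp (.lam t) ol nl e)
         (.lam (.susp t (ol + 1) (nl + 1) (.econs (.idx 1) (nl + 1) e)))
  | m1 : ∀ t ol1 nl1 e1 ol2 nl2 e2,
      SR (.susp (.susp t ol1 nl1 e1) ol2 nl2 e2)
         (.susp t (ol1 + (ol2 - nl1)) (nl2 + (nl1 - ol2)) (.merge e1 nl1 ol2 e2))
  | appL : ∀ {t1 t1'} (t2 : Tm), SR t1 t1' → SR (.app t1 t2) (.app t1' t2)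
  | appR : ∀ (t1 : Tm) {t2 t2'}, SR t2 t2' → SR (.app t1 t2) (.app t1 t2')
  | lamC : ∀ {t t'}, SR t t' → SR (.lam t) (.lam t')
  | suspT : ∀ {t t'} ol nl e, SR t t' → SR (.susp t ol nl e) (.susp t' ol nl e)
  | suspE : ∀ t ol nl {e e'}, SRE e e' → SR (.susp t ol nl e) (.susp t ol nl e')
inductive SRE : Env → Env → Prop where
  | m2 : ∀ e1 nl1, SRE (.merge e1 nl1 0 .nil) e1
  | m3 : ∀ ol2 e2, SRE (.merge .nil 0 ol2 e2) e2
  | m4 : ∀ nl1 ol2 t l e2, 1 ≤ nl1 →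
      SRE (.merge .nil nl1 ol2 (.econs t l e2)) (.merge .nil (nl1 - 1) (ol2 - 1) e2)
  | m5 : ∀ t n e1 nl1 ol2 s l e2, n < nl1 →
      SRE (.merge (.econs t n e1) nl1 ol2 (.econs s l e2))
          (.merge (.econs t n e1) (nl1 - 1) (ol2 - 1) e2)
  | m6 : ∀ t n e1 ol2 s l e2,
      SRE (.merge (.econs t n e1) n ol2 (.econs s l e2))
          (.econs (.susp t ol2 l (.econs s l e2)) (l + (n - ol2))
                  (.merge e1 n ol2 (.econs s l e2)))
  | consT : ∀ {t t'} l e, SR t t' → SRE (.econs t l e) (.econs t' l e)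
  | consE : ∀ t l {e e'}, SRE e e' → SRE (.econs t l e) (.econs t l e')
  | mergeL : ∀ {e1 e1'} nl1 ol2 e2, SRE e1 e1' →
      SRE (.merge e1 nl1 ol2 e2) (.merge e1' nl1 ol2 e2)
  | mergeR : ∀ e1 nl1 ol2 {e2 e2'}, SRE e2 e2' →
      SRE (.merge e1 nl1 ol2 e2) (.merge e1 nl1 ol2 e2')
end

/-- A term is in normal form w.r.t. the reading and merging rules. -/
def NormalT (t : Tm) : Prop := ∀ u, ¬ SR t u

/-- An environment is in normal form w.r.t. the reading and merging rules. -/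
def NormalE (e : Env) : Prop := ∀ u, ¬ SRE e u

/-!
Confluence is proved by interpretation rather than by analysing critical pairs. A suspension
`[t, ol, nl, e]` denotes a substitution on pure (suspension-free) de Bruijn terms, and an
environment denotes a list of pure entries, a merge `{e1, nl1, ol2, e2}` being computed by
the list version of rules (m2)-(m6). Evaluating along these lines gives a pure term `evalTm s`
for every well-formed `s`. Each rewrite step preserves well-formedness and the evaluation (for
(m1) this is the fact that merging composes the denoted substitutions), every well-formed
expression rewrites to its evaluation, and pure terms are irreducible. Hence any two reducts
of `s` are joined at the evaluation of `s`, which is also its only reachable normal form.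
-/

open Relation

inductive Tm.IsPure : Tm → Prop
  | const (c : Nat) : IsPure (.const c)
  | idx {i : Nat} : 1 ≤ i → IsPure (.idx i)
  | app {a b : Tm} : IsPure a → IsPure b → IsPure (.app a b)
  | lam {a : Tm} : IsPure a → IsPure (.lam a)

def liftRen (r : Nat → Nat) : Nat → Nat
  | 0 => 0
  | 1 => 1
  | j + 2 => r (j + 1) + 1

/- `rename` and `subst` are the usual de Bruijn operations on pure terms; they leave
suspensions untouched, so they are only meaningful on `IsPure` terms. Indices start at `1`,
and the values of `liftRen` and `liftSubst` at `0` are junk. -/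
def Tm.rename (r : Nat → Nat) : Tm → Tm
  | .const c => .const c
  | .idx i => .idx (r i)
  | .app a b => .app (a.rename r) (b.rename r)
  | .lam a => .lam (a.rename (liftRen r))
  | t@(.susp ..) => t

def liftSubst (σ : Nat → Tm) : Nat → Tm
  | 0 => .idx 0
  | 1 => .idx 1
  | j + 2 => (σ (j + 1)).rename (· + 1)

def Tm.subst (σ : Nat → Tm) : Tm → Tm
  | .const c => .const c
  | .idx i => σ i
  | .app a b => .app (a.subst σ) (b.subst σ)
  | .lam a => .lam (a.subst (liftSubst σ))
  | t@(.susp ..) => t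

def MapsPos (r : Nat → Nat) : Prop := ∀ i, 1 ≤ i → 1 ≤ r i

def IsPureSubst (σ : Nat → Tm) : Prop := ∀ i, 1 ≤ i → (σ i).IsPure

theorem liftRen_succ (r : Nat → Nat) {j : Nat} (hj : 1 ≤ j) : liftRen r (j + 1) = r j + 1 := by
  obtain ⟨m, rfl⟩ := Nat.exists_eq_add_of_le' hj
  rfl

theorem liftSubst_succ (σ : Nat → Tm) {j : Nat} (hj : 1 ≤ j) :
    liftSubst σ (j + 1) = (σ j).rename (· + 1) := by
  obtain ⟨m, rfl⟩ := Nat.exists_eq_add_of_le' hj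
  rfl

theorem mapsPos_liftRen (r : Nat → Nat) : MapsPos (liftRen r) := by
  rintro (_ | _ | j) hj
  · omega
  · exact le_rfl
  · simp [_root_.liftRen]

theorem mapsPos_add_right (k : Nat) : MapsPos (· + k) := fun _ hi => Nat.le_add_right_of_le hi

namespace Tm.IsPure

variable {t : Tm}

theorem rename_congr (ht : t.IsPure) {r r' : Nat → Nat} (h : ∀ i, 1 ≤ i → r i = r' i) :
    t.rename r = t.rename r' := by
  induction ht generalizing r r' with
  | const c => rfl
  | idx hi => simp [Tm.rename, h _ hi]
  | app _ _ iha ihb => simp [Tm.rename, iha h, ihb h]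
  | lam _ ih =>
    simp only [Tm.rename, Tm.lam.injEq]
    refine ih ?_
    rintro (_ | _ | j) hj <;> simp [liftRen, h]

theorem subst_congr (ht : t.IsPure) {σ σ' : Nat → Tm} (h : ∀ i, 1 ≤ i → σ i = σ' i) :
    t.subst σ = t.subst σ' := by
  induction ht generalizing σ σ' with
  | const c => rfl
  | idx hi => simp [Tm.subst, h _ hi]
  | app _ _ iha ihb => simp [Tm.subst, iha h, ihb h]
  | lam _ ih =>
    simp only [Tm.subst, Tm.lam.injEq]
    refine ih ?_
    rintro (_ | _ | j) hj <;> simp [liftSubst, h]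

theorem rename_eq_self (ht : t.IsPure) {r : Nat → Nat} (h : ∀ i, 1 ≤ i → r i = i) :
    t.rename r = t := by
  induction ht generalizing r with
  | const c => rfl
  | idx hi => simp [Tm.rename, h _ hi]
  | app _ _ iha ihb => simp [Tm.rename, iha h, ihb h]
  | lam _ ih =>
    simp only [Tm.rename, Tm.lam.injEq]
    refine ih ?_
    rintro (_ | _ | j) hj <;> simp [liftRen, h]

protected theorem rename (ht : t.IsPure) {r : Nat → Nat} (hr : MapsPos r) :
    (t.rename r).IsPure := by
  induction ht generalizing r with
  | const c => exact .const c
  | idx hi => exact .idx (hr _ hi)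
  | app _ _ iha ihb => exact .app (iha hr) (ihb hr)
  | lam _ ih => exact .lam (ih (mapsPos_liftRen r))

theorem rename_rename (ht : t.IsPure) {r r' : Nat → Nat} (hr' : MapsPos r') :
    (t.rename r').rename r = t.rename (r ∘ r') := by
  induction ht generalizing r r' with
  | const c => rfl
  | idx _ => rfl
  | app _ _ iha ihb => simp [Tm.rename, iha hr', ihb hr']
  | lam ha ih =>
    simp only [Tm.rename, Tm.lam.injEq, ih (mapsPos_liftRen r')]
    refine ha.rename_congr ?_
    rintro (_ | _ | j) hj
    · omega
    · rfl
    · exact liftRen_succ r (hr' (j + 1) (by omega))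

theorem rename_add_add (ht : t.IsPure) (m k : Nat) :
    (t.rename (· + m)).rename (· + k) = t.rename (· + (m + k)) := by
  rw [ht.rename_rename (mapsPos_add_right m)]
  exact ht.rename_congr fun i _ => by simp [Nat.add_assoc]

theorem subst_rename (ht : t.IsPure) {σ : Nat → Tm} {r : Nat → Nat} (hr : MapsPos r) :
    (t.rename r).subst σ = t.subst (σ ∘ r) := by
  induction ht generalizing σ r with
  | const c => rfl
  | idx _ => rfl
  | app _ _ iha ihb => simp [Tm.rename, Tm.subst, iha hr, ihb hr]
  | lam ha ih =>
    simp only [Tm.rename, Tm.subst, Tm.lam.injEq, ih (mapsPos_liftRen r)]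
    refine ha.subst_congr ?_
    rintro (_ | _ | j) hj
    · omega
    · rfl
    · exact liftSubst_succ σ (hr (j + 1) (by omega))

end Tm.IsPure

theorem IsPureSubst.liftSubst {σ : Nat → Tm} (hσ : IsPureSubst σ) :
    IsPureSubst (liftSubst σ) := by
  rintro (_ | _ | j) hj
  · omega
  · exact .idx le_rfl
  · exact (hσ (j + 1) (by omega)).rename (mapsPos_add_right 1)

namespace Tm.IsPure

variable {t : Tm}

protected theorem subst (ht : t.IsPure) {σ : Nat → Tm} (hσ : IsPureSubst σ) :
    (t.subst σ).IsPure := by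
  induction ht generalizing σ with
  | const c => exact .const c
  | idx hi => exact hσ _ hi
  | app _ _ iha ihb => exact .app (iha hσ) (ihb hσ)
  | lam _ ih => exact .lam (ih hσ.liftSubst)

theorem rename_subst (ht : t.IsPure) {σ : Nat → Tm} {r : Nat → Nat} (hr : MapsPos r)
    (hσ : IsPureSubst σ) : (t.subst σ).rename r = t.subst (fun i => (σ i).rename r) := by
  induction ht generalizing σ r with
  | const c => rfl
  | idx _ => rfl
  | app _ _ iha ihb => simp [Tm.subst, Tm.rename, iha hr hσ, ihb hr hσ]
  | lam ha ih =>
    simp only [Tm.subst, Tm.rename, Tm.lam.injEq, ih (mapsPos_liftRen r) hσ.liftSubst]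
    refine ha.subst_congr ?_
    rintro (_ | _ | j) hj
    · omega
    · rfl
    · have hσj := hσ (j + 1) (by omega)
      simp only [liftSubst, hσj.rename_rename (mapsPos_add_right 1),
        hσj.rename_rename hr]
      exact hσj.rename_congr fun m hm => by simp [liftRen_succ r hm]

theorem subst_subst (ht : t.IsPure) {σ τ : Nat → Tm} (hσ : IsPureSubst σ)
    (hτ : IsPureSubst τ) : (t.subst τ).subst σ = t.subst (fun i => (τ i).subst σ) := by
  induction ht generalizing σ τ with
  | const c => rfl
  | idx _ => rfl
  | app _ _ iha ihb => simp [Tm.subst, iha hσ hτ, ihb hσ hτ]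
  | lam ha ih =>
    simp only [Tm.subst, Tm.lam.injEq, ih hσ.liftSubst hτ.liftSubst]
    refine ha.subst_congr ?_
    rintro (_ | _ | j) hj
    · omega
    · rfl
    · have hτj := hτ (j + 1) (by omega)
      simp only [liftSubst, hτj.subst_rename (mapsPos_add_right 1),
        hτj.rename_subst (mapsPos_add_right 1) hσ]
      exact hτj.subst_congr fun m hm => by simp [liftSubst_succ σ hm]

theorem rename_eq_subst (ht : t.IsPure) (r : Nat → Nat) :
    t.rename r = t.subst (fun i => .idx (r i)) := by
  induction ht generalizing r with
  | const c => rfl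
  | idx _ => rfl
  | app _ _ iha ihb => simp [Tm.rename, Tm.subst, iha, ihb]
  | lam ha ih =>
    simp only [Tm.rename, Tm.subst, Tm.lam.injEq, ih]
    refine ha.subst_congr ?_
    rintro (_ | _ | j) hj <;> rfl

end Tm.IsPure

/- A list `L` stands for the normal environment `(t₁,l₁) :: … :: (tₙ,lₙ) :: nil`, and
`envSubst nl L` is the substitution that the suspension `[·, n, nl, L]` performs on a
pure term: `#i` becomes `tᵢ` lifted by `nl - lᵢ` for `i ≤ n`, and `#(i - n + nl)` beyond. -/
def envSubst (nl : Nat) : List (Tm × Nat) → Nat → Tm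
  | [], i => .idx (i + nl)
  | (t, l) :: _, 1 => t.rename (· + (nl - l))
  | _ :: L, i + 2 => envSubst nl L (i + 1)
  | _ :: _, 0 => .idx 0

def LevelsBelow : List (Tm × Nat) → Nat → Prop
  | [], _ => True
  | (_, l) :: L, nl => l ≤ nl ∧ LevelsBelow L l

def AllPure : List (Tm × Nat) → Prop
  | [] => True
  | p :: L => p.1.IsPure ∧ AllPure L

theorem envSubst_cons_succ (nl : Nat) (p : Tm × Nat) (L : List (Tm × Nat)) {i : Nat}
    (hi : 1 ≤ i) : envSubst nl (p :: L) (i + 1) = envSubst nl L i := by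
  obtain ⟨m, rfl⟩ := Nat.exists_eq_add_of_le' hi
  rfl

theorem LevelsBelow.mono {L : List (Tm × Nat)} {n m : Nat} (h : LevelsBelow L n)
    (hnm : n ≤ m) : LevelsBelow L m := by
  match L, h with
  | [], _ => trivial
  | _ :: _, h => exact ⟨h.1.trans hnm, h.2⟩

theorem isPureSubst_envSubst (nl : Nat) {L : List (Tm × Nat)} (hP : AllPure L) :
    IsPureSubst (envSubst nl L) := by
  induction L with
  | nil => exact fun i hi => .idx (Nat.le_add_right_of_le hi)
  | cons p L ih =>
    rintro (_ | _ | i) hi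
    · omega
    · exact hP.1.rename (mapsPos_add_right _)
    · exact ih hP.2 (i + 1) (by omega)

theorem rename_add_envSubst {nl : Nat} {L : List (Tm × Nat)} (hP : AllPure L)
    (hL : LevelsBelow L nl) (k : Nat) {i : Nat} (hi : 1 ≤ i) :
    (envSubst nl L i).rename (· + k) = envSubst (nl + k) L i := by
  induction L generalizing nl i with
  | nil => simp [envSubst, Tm.rename, Nat.add_assoc]
  | cons p L ih =>
    obtain ⟨t, l⟩ := p
    rcases i with _ | _ | i
    · omega
    · simp only [envSubst, hP.1.rename_add_add]
      congr 2
      funext x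
      have := hL.1
      omega
    · exact ih hP.2 (hL.2.mono hL.1) (by omega)

theorem Tm.IsPure.subst_envSubst_nil {t : Tm} (ht : t.IsPure) (nl : Nat) :
    t.subst (envSubst nl []) = t.rename (· + nl) :=
  (ht.rename_eq_subst _).symm

theorem liftSubst_envSubst {nl : Nat} {L : List (Tm × Nat)} (hP : AllPure L)
    (hL : LevelsBelow L nl) {i : Nat} (hi : 1 ≤ i) :
    liftSubst (envSubst nl L) i = envSubst (nl + 1) ((.idx 1, nl + 1) :: L) i := by
  rcases i with _ | _ | i
  · omega
  · simp [liftSubst, envSubst, Tm.rename]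
  · exact rename_add_envSubst hP hL 1 (by omega)

def mergeList : List (Tm × Nat) → Nat → List (Tm × Nat) → List (Tm × Nat)
  | [], 0, L2 => L2
  | [], _ + 1, [] => []
  | [], n + 1, _ :: L2 => mergeList [] n L2
  | p :: L1, _, [] => p :: L1
  | (t, n) :: L1, nl1, (s, l) :: L2 =>
    if n < nl1 then mergeList ((t, n) :: L1) (nl1 - 1) L2
    else (t.subst (envSubst l ((s, l) :: L2)), l + (n - (L2.length + 1))) ::
      mergeList L1 n ((s, l) :: L2)
  termination_by L1 _ L2 => L1.length + L2.length

theorem mergeList_nil_right (L1 : List (Tm × Nat)) (nl1 : Nat) : mergeList L1 nl1 [] = L1 := by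
  match L1, nl1 with
  | [], 0 => rw [mergeList]
  | [], _ + 1 => rw [mergeList]
  | _ :: _, _ => rw [mergeList]

theorem length_mergeList {L1 : List (Tm × Nat)} {nl1 : Nat} (L2 : List (Tm × Nat))
    (h1 : LevelsBelow L1 nl1) :
    (mergeList L1 nl1 L2).length = L1.length + (L2.length - nl1) := by
  induction L1, nl1, L2 using mergeList.induct with
  | case1 L2 => simp [mergeList]
  | case2 n => simp [mergeList]
  | case3 n _ L2 ih => rw [mergeList, ih trivial]; simp
  | case4 p L1 _ => simp [mergeList_nil_right]
  | case5 t n L1 nl1 s l L2 hlt ih =>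
    rw [mergeList, if_pos hlt, ih ⟨by omega, h1.2⟩]
    simp only [List.length_cons]
    omega
  | case6 t n L1 nl1 s l L2 hlt ih =>
    obtain rfl : n = nl1 := by have := h1.1; omega
    rw [mergeList, if_neg hlt]
    simp only [List.length_cons, ih h1.2]
    omega

theorem LevelsBelow.mergeList {L1 L2 : List (Tm × Nat)} {nl1 nl2 : Nat}
    (h1 : LevelsBelow L1 nl1) (h2 : LevelsBelow L2 nl2) :
    LevelsBelow (_root_.mergeList L1 nl1 L2) (nl2 + (nl1 - L2.length)) := by
  induction L1, nl1, L2 using _root_.mergeList.induct generalizing nl2 with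
  | case1 L2 => rw [_root_.mergeList]; exact h2.mono (by omega)
  | case2 n => rw [_root_.mergeList]; trivial
  | case3 n _ L2 ih =>
    rw [_root_.mergeList]
    exact (ih trivial (h2.2.mono h2.1)).mono (by simp only [List.length_cons]; omega)
  | case4 p L1 _ => rw [mergeList_nil_right]; exact h1.mono (by simp)
  | case5 t n L1 nl1 s l L2 hlt ih =>
    rw [_root_.mergeList, if_pos hlt]
    exact (ih ⟨by omega, h1.2⟩ (h2.2.mono h2.1)).mono (by simp only [List.length_cons]; omega)
  | case6 t n L1 nl1 s l L2 hlt ih =>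
    obtain rfl : n = nl1 := by have := h1.1; omega
    rw [_root_.mergeList, if_neg hlt]
    refine ⟨by have := h2.1; simp only [List.length_cons]; omega, ?_⟩
    exact (ih h1.2 (⟨le_rfl, h2.2⟩ : LevelsBelow ((s, l) :: L2) l)).mono
      (by simp only [List.length_cons]; omega)

theorem AllPure.mergeList {L1 L2 : List (Tm × Nat)} (nl1 : Nat) (h1 : AllPure L1)
    (h2 : AllPure L2) : AllPure (_root_.mergeList L1 nl1 L2) := by
  induction L1, nl1, L2 using _root_.mergeList.induct with
  | case1 L2 => rwa [_root_.mergeList]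
  | case2 n => rw [_root_.mergeList]; trivial
  | case3 n _ L2 ih => rw [_root_.mergeList]; exact ih trivial h2.2
  | case4 p L1 _ => rwa [mergeList_nil_right]
  | case5 t n L1 nl1 s l L2 hlt ih => rw [_root_.mergeList, if_pos hlt]; exact ih h1 h2.2
  | case6 t n L1 nl1 s l L2 hlt ih =>
    rw [_root_.mergeList, if_neg hlt]
    exact ⟨h1.1.subst (isPureSubst_envSubst l h2), ih h1.2 h2⟩

theorem subst_envSubst_cons_of_succ {m : Nat} {L1 : List (Tm × Nat)} (hP : AllPure L1)
    (hL : LevelsBelow L1 m) (nl2 : Nat) (x : Tm × Nat) (L2 : List (Tm × Nat)) {i : Nat}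
    (hi : 1 ≤ i) :
    (envSubst (m + 1) L1 i).subst (envSubst nl2 (x :: L2)) =
      (envSubst m L1 i).subst (envSubst nl2 L2) := by
  have hpure := isPureSubst_envSubst m hP i hi
  rw [← rename_add_envSubst hP hL 1 hi, hpure.subst_rename (mapsPos_add_right 1)]
  exact hpure.subst_congr fun j hj => envSubst_cons_succ nl2 x L2 hj

theorem subst_envSubst_envSubst {L1 L2 : List (Tm × Nat)} {nl1 nl2 : Nat} (hP1 : AllPure L1)
    (hP2 : AllPure L2) (h1 : LevelsBelow L1 nl1) (h2 : LevelsBelow L2 nl2) {i : Nat}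
    (hi : 1 ≤ i) :
    (envSubst nl1 L1 i).subst (envSubst nl2 L2) =
      envSubst (nl2 + (nl1 - L2.length)) (mergeList L1 nl1 L2) i := by
  induction L1, nl1, L2 using mergeList.induct generalizing nl2 i with
  | case1 L2 => simp [mergeList, envSubst, Tm.subst]
  | case2 n => simp [mergeList, envSubst, Tm.subst]; omega
  | case3 n x L2 ih =>
    show envSubst nl2 (x :: L2) ((i + n) + 1) = _
    rw [envSubst_cons_succ _ _ _ (by omega), mergeList]
    simp only [List.length_cons, Nat.succ_sub_succ]
    exact ih hP1 hP2.2 h1 (h2.2.mono h2.1) hi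
  | case4 p L1 _ =>
    rw [mergeList_nil_right, (isPureSubst_envSubst _ hP1 i hi).subst_envSubst_nil,
      rename_add_envSubst hP1 h1 nl2 hi]
    simp [Nat.add_comm]
  | case5 t n L1 nl1 s l L2 hlt ih =>
    obtain ⟨m, rfl⟩ : ∃ m, nl1 = m + 1 := ⟨nl1 - 1, by omega⟩
    rw [mergeList, if_pos hlt, Nat.add_sub_cancel,
      subst_envSubst_cons_of_succ hP1 ⟨by omega, h1.2⟩ _ _ _ hi]
    simpa using ih hP1 hP2.2 ⟨by omega, h1.2⟩ (h2.2.mono h2.1) hi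
  | case6 t n L1 nl1 s l L2 hlt ih =>
    obtain rfl : n = nl1 := by have := h1.1; omega
    rw [mergeList, if_neg hlt]
    rcases i with _ | _ | i
    · omega
    · have hl := h2.1
      simp only [envSubst, Nat.sub_self]
      rw [hP1.1.rename_eq_self (r := (· + 0)) fun _ _ => rfl,
        hP1.1.rename_subst (mapsPos_add_right _) (isPureSubst_envSubst l hP2)]
      refine hP1.1.subst_congr fun j hj => ?_
      rw [rename_add_envSubst hP2 ⟨le_rfl, h2.2⟩ _ hj]
      congr 1
      simp only [List.length_cons]
      omega
    · exact ih hP1.2 hP2 h1.2 h2 (by omega)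

mutual
def evalTm : Tm → Tm
  | .const c => .const c
  | .idx i => .idx i
  | .app a b => .app (evalTm a) (evalTm b)
  | .lam a => .lam (evalTm a)
  | .susp t _ nl e => (evalTm t).subst (envSubst nl (evalEnv e))
def evalEnv : Env → List (Tm × Nat)
  | .nil => []
  | .econs t l e => (evalTm t, l) :: evalEnv e
  | .merge e1 nl1 _ e2 => mergeList (evalEnv e1) nl1 (evalEnv e2)
end

def Env.ofList : List (Tm × Nat) → Env
  | [] => .nil
  | (t, l) :: L => .econs t l (ofList L)

mutual
theorem isPure_evalTm : ∀ {t : Tm}, WfTm t → (evalTm t).IsPure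
  | _, .const c => .const c
  | _, .idx _ hi => .idx hi
  | _, .app wa wb => .app (isPure_evalTm wa) (isPure_evalTm wb)
  | _, .lam wa => .lam (isPure_evalTm wa)
  | _, .susp _ _ wt we _ _ =>
    (isPure_evalTm wt).subst (isPureSubst_envSubst _ (evalEnv_spec we).1)
theorem evalEnv_spec : ∀ {e : Env}, WfEnv e →
    AllPure (evalEnv e) ∧ LevelsBelow (evalEnv e) e.lev ∧ (evalEnv e).length = e.len
  | _, .nil => ⟨trivial, trivial, rfl⟩
  | _, .econs _ wt we hle =>
    have ⟨hP, hL, hlen⟩ := evalEnv_spec we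
    ⟨⟨isPure_evalTm wt, hP⟩, ⟨le_rfl, hL.mono hle⟩,
      by simp [evalEnv, Env.len, hlen, Nat.add_comm]⟩
  | _, .merge nl1 ol2 we1 we2 hlev1 hlen2 =>
    have ⟨hP1, hL1, hlen1⟩ := evalEnv_spec we1
    have ⟨hP2, hL2, hlen2'⟩ := evalEnv_spec we2
    ⟨hP1.mergeList nl1 hP2,
      by simpa [evalEnv, Env.lev, hlen2', hlen2] using (hL1.mono hlev1).mergeList hL2,
      by simp [evalEnv, Env.len, length_mergeList _ (hL1.mono hlev1), hlen1, hlen2']⟩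
end

theorem Tm.IsPure.normalT {t : Tm} (ht : t.IsPure) : NormalT t := by
  induction ht with
  | const c => rintro _ ⟨⟩
  | idx _ => rintro _ ⟨⟩
  | app _ _ iha ihb =>
    intro _ h
    cases h with
    | appL _ h => exact iha _ h
    | appR _ h => exact ihb _ h
  | lam _ ih =>
    intro _ h
    cases h with
    | lamC h => exact ih _ h

theorem AllPure.normalE {L : List (Tm × Nat)} (hP : AllPure L) : NormalE (Env.ofList L) := by
  induction L with
  | nil => rintro _ ⟨⟩
  | cons p L ih =>
    intro _ h
    cases h with
    | consT _ _ h => exact hP.1.normalT _ h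
    | consE _ _ h => exact ih hP.2 _ h

mutual
theorem wfTm_of_SR : ∀ {t t' : Tm}, SR t t' → WfTm t → WfTm t'
  | _, _, .r1 c .., _ => .const c
  | _, _, .r2 _ _ hi, _ => .idx _ (Nat.le_add_right_of_le hi)
  | _, _, .r3 .., .susp _ _ _ (.econs _ wt _ _) _ _ => .susp _ _ wt .nil rfl (Nat.zero_le _)
  | _, _, .r4 .., .susp _ _ _ (.econs _ _ we hle) hlen hlev => by
    simp only [Env.len, Env.lev] at hlen hlev
    exact .susp _ _ (.idx _ (by omega)) we (by omega) (hle.trans hlev)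
  | _, _, .r5 .., .susp _ _ (.app w1 w2) we hlen hlev =>
    .app (.susp _ _ w1 we hlen hlev) (.susp _ _ w2 we hlen hlev)
  | _, _, .r6 .., .susp _ _ (.lam w) we hlen hlev => by
    refine .lam (.susp _ _ w (.econs _ (.idx _ le_rfl) we (by omega)) ?_ le_rfl)
    simp only [Env.len]
    omega
  | _, _, .m1 .., .susp _ _ (.susp _ _ wt we1 hlen1 hlev1) we2 hlen2 hlev2 => by
    refine .susp _ _ wt (.merge _ _ we1 we2 hlev1 hlen2) ?_ ?_ <;>
      simp only [Env.len, Env.lev] <;> omega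
  | _, _, .appL _ h, .app w1 w2 => .app (wfTm_of_SR h w1) w2
  | _, _, .appR _ h, .app w1 w2 => .app w1 (wfTm_of_SR h w2)
  | _, _, .lamC h, .lam w => .lam (wfTm_of_SR h w)
  | _, _, .suspT _ _ _ h, .susp _ _ wt we hlen hlev => .susp _ _ (wfTm_of_SR h wt) we hlen hlev
  | _, _, .suspE _ _ _ h, .susp _ _ wt we hlen hlev =>
    have ⟨we', hlen', hlev'⟩ := wfEnv_len_lev_of_SRE h we
    .susp _ _ wt we' (hlen'.trans hlen) (hlev'.trans hlev)
theorem wfEnv_len_lev_of_SRE : ∀ {e e' : Env}, SRE e e' → WfEnv e →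
    WfEnv e' ∧ e'.len = e.len ∧ e'.lev ≤ e.lev
  | _, _, .m2 .., .merge _ _ we1 _ _ _ => ⟨we1, by simp [Env.len, Env.lev]; omega⟩
  | _, _, .m3 .., .merge _ _ _ we2 _ _ => ⟨we2, by simp [Env.len, Env.lev]⟩
  | _, _, .m4 .., .merge _ _ _ (.econs _ _ we2 _) _ hlen2 => by
    simp only [Env.len] at hlen2
    refine ⟨.merge _ _ .nil we2 (Nat.zero_le _) (by omega), ?_, ?_⟩ <;>
      simp only [Env.len, Env.lev] <;> omega
  | _, _, .m5 .., .merge _ _ we1 (.econs _ _ we2 _) hlev1 hlen2 => by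
    simp only [Env.len, Env.lev] at hlen2 hlev1
    refine ⟨.merge _ _ we1 we2 (by simp only [Env.lev]; omega) (by omega), ?_, ?_⟩ <;>
      simp only [Env.len, Env.lev] <;> omega
  | _, _, .m6 .., .merge _ _ (.econs _ wt we1 hle1) we2 hlev1 hlen2 => by
    refine ⟨.econs _ (.susp _ _ wt we2 hlen2 (by simp only [Env.lev]; omega))
      (.merge _ _ we1 we2 hle1 hlen2) (by simp only [Env.lev]; omega), ?_, ?_⟩ <;>
      simp only [Env.len, Env.lev] <;> omega
  | _, _, .consT _ _ h, .econs _ wt we hle => ⟨.econs _ (wfTm_of_SR h wt) we hle, rfl, le_rfl⟩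
  | _, _, .consE _ _ h, .econs _ wt we hle =>
    have ⟨we', hlen', hlev'⟩ := wfEnv_len_lev_of_SRE h we
    ⟨.econs _ wt we' (hlev'.trans hle), by simp [Env.len, hlen'], le_rfl⟩
  | _, _, .mergeL _ _ _ h, .merge _ _ we1 we2 hlev1 hlen2 =>
    have ⟨we1', hlen1', hlev1'⟩ := wfEnv_len_lev_of_SRE h we1
    ⟨.merge _ _ we1' we2 (hlev1'.trans hlev1) hlen2, by simp [Env.len, hlen1'], le_rfl⟩
  | _, _, .mergeR _ _ _ h, .merge _ _ we1 we2 hlev1 hlen2 =>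
    have ⟨we2', hlen2', hlev2'⟩ := wfEnv_len_lev_of_SRE h we2
    ⟨.merge _ _ we1 we2' hlev1 (hlen2'.trans hlen2), by simp [Env.len, hlen2'],
      by simp only [Env.lev]; omega⟩
end

mutual
theorem evalTm_eq_of_SR : ∀ {t t' : Tm}, SR t t' → WfTm t → evalTm t = evalTm t'
  | _, _, .r1 .., _ => rfl
  | _, _, .r2 .., _ => rfl
  | _, _, .r3 .., .susp _ _ _ (.econs _ wt _ _) _ _ =>
    ((isPure_evalTm wt).subst_envSubst_nil _).symm
  | _, _, .r4 i _ nl t l e hi, _ => by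
    obtain ⟨j, rfl⟩ : ∃ j, i = j + 1 := ⟨i - 1, by omega⟩
    exact envSubst_cons_succ nl (evalTm t, l) (evalEnv e) (by omega)
  | _, _, .r5 .., _ => rfl
  | _, _, .r6 .., .susp _ _ (.lam wt) we _ hlev =>
    have ⟨hP, hL, _⟩ := evalEnv_spec we
    congrArg Tm.lam <|
      (isPure_evalTm wt).subst_congr fun _ hi => liftSubst_envSubst hP (hL.mono hlev) hi
  | _, _, .m1 .., .susp _ _ (.susp _ _ wt we1 _ hlev1) we2 hlen2 hlev2 => by
    have ⟨hP1, hL1, _⟩ := evalEnv_spec we1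
    have ⟨hP2, hL2, hlenL2⟩ := evalEnv_spec we2
    have hpure := isPure_evalTm wt
    simp only [evalTm, evalEnv]
    rw [hpure.subst_subst (isPureSubst_envSubst _ hP2) (isPureSubst_envSubst _ hP1)]
    refine hpure.subst_congr fun i hi => ?_
    rw [subst_envSubst_envSubst hP1 hP2 (hL1.mono hlev1) (hL2.mono hlev2) hi, hlenL2, hlen2]
  | _, _, .appL _ h, .app w _ => by simp only [evalTm, evalTm_eq_of_SR h w]
  | _, _, .appR _ h, .app _ w => by simp only [evalTm, evalTm_eq_of_SR h w]
  | _, _, .lamC h, .lam w => by simp only [evalTm, evalTm_eq_of_SR h w]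
  | _, _, .suspT _ _ _ h, .susp _ _ w _ _ _ => by simp only [evalTm, evalTm_eq_of_SR h w]
  | _, _, .suspE _ _ _ h, .susp _ _ _ w _ _ => by simp only [evalTm, evalEnv_eq_of_SRE h w]
theorem evalEnv_eq_of_SRE : ∀ {e e' : Env}, SRE e e' → WfEnv e → evalEnv e = evalEnv e'
  | _, _, .m2 .., _ => mergeList_nil_right _ _
  | _, _, .m3 .., _ => by simp only [evalEnv, mergeList]
  | _, _, .m4 (n + 1) .., _ => by simp only [evalEnv, mergeList, Nat.add_sub_cancel]
  | _, _, .m5 _ _ _ _ _ _ _ _ hlt, _ => by simp only [evalEnv, mergeList, if_pos hlt]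
  | _, _, .m6 .., .merge _ _ _ we2 _ hlen2 => by
    have hlen := (evalEnv_spec we2).2.2
    simp only [evalEnv, List.length_cons, Env.len] at hlen hlen2
    simp only [evalEnv, evalTm, mergeList, lt_irrefl, if_false]
    congr 3
    omega
  | _, _, .consT _ _ h, .econs _ w _ _ => by simp only [evalEnv, evalTm_eq_of_SR h w]
  | _, _, .consE _ _ h, .econs _ _ w _ => by simp only [evalEnv, evalEnv_eq_of_SRE h w]
  | _, _, .mergeL _ _ _ h, .merge _ _ w _ _ _ => by simp only [evalEnv, evalEnv_eq_of_SRE h w]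
  | _, _, .mergeR _ _ _ h, .merge _ _ _ w _ _ => by simp only [evalEnv, evalEnv_eq_of_SRE h w]
end

section Reduction

variable {a a' b b' : Tm} {e e' f f' : Env}

theorem reflTransGen_app (ha : ReflTransGen SR a a') (hb : ReflTransGen SR b b') :
    ReflTransGen SR (.app a b) (.app a' b') :=
  (ha.lift (Tm.app · b) fun _ _ h => .appL b h).trans
    (hb.lift (Tm.app a' ·) fun _ _ h => .appR a' h)

theorem reflTransGen_lam (ha : ReflTransGen SR a a') : ReflTransGen SR (.lam a) (.lam a') :=
  ha.lift Tm.lam fun _ _ h => .lamC h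

theorem reflTransGen_susp (ha : ReflTransGen SR a a') (he : ReflTransGen SRE e e')
    (ol nl : Nat) : ReflTransGen SR (.susp a ol nl e) (.susp a' ol nl e') :=
  (ha.lift (Tm.susp · ol nl e) fun _ _ h => .suspT ol nl e h).trans
    (he.lift (Tm.susp a' ol nl ·) fun _ _ h => .suspE a' ol nl h)

theorem reflTransGen_econs (ha : ReflTransGen SR a a') (he : ReflTransGen SRE e e') (l : Nat) :
    ReflTransGen SRE (.econs a l e) (.econs a' l e') :=
  (ha.lift (Env.econs · l e) fun _ _ h => .consT l e h).trans
    (he.lift (Env.econs a' l ·) fun _ _ h => .consE a' l h)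

theorem reflTransGen_merge (he : ReflTransGen SRE e e') (hf : ReflTransGen SRE f f')
    (nl1 ol2 : Nat) : ReflTransGen SRE (.merge e nl1 ol2 f) (.merge e' nl1 ol2 f') :=
  (he.lift (Env.merge · nl1 ol2 f) fun _ _ h => .mergeL nl1 ol2 f h).trans
    (hf.lift (Env.merge e' nl1 ol2 ·) fun _ _ h => .mergeR e' nl1 ol2 h)

end Reduction

def ShiftReduces (s : Tm) : Prop :=
  ∀ m, ReflTransGen SR (.susp s 0 m .nil) (s.rename (· + m))

theorem AllPure.isPure_of_mem {L : List (Tm × Nat)} (hP : AllPure L) {p : Tm × Nat}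
    (hp : p ∈ L) : p.1.IsPure := by
  induction L with
  | nil => cases hp
  | cons q L ih => exact (List.mem_cons.1 hp).elim (· ▸ hP.1) (ih hP.2)

theorem susp_idx_reduces {L : List (Tm × Nat)} (hS : ∀ p ∈ L, ShiftReduces p.1) (nl : Nat)
    {i : Nat} (hi : 1 ≤ i) :
    ReflTransGen SR (.susp (.idx i) L.length nl (Env.ofList L)) (envSubst nl L i) := by
  induction L generalizing i with
  | nil => exact .single (.r2 i nl hi)
  | cons p L ih =>
    obtain ⟨s, l⟩ := p
    rcases i with _ | _ | i
    · omega
    · exact .head (.r3 ..) (hS _ List.mem_cons_self (nl - l))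
    · exact .head (.r4 (i + 2) _ nl s l _ (by omega))
        (ih (fun p hp => hS p (List.mem_cons_of_mem _ hp)) (by omega))

/- Rule (r3) turns a lookup into a suspension `[t, 0, k, nil]` of an entry `t`, which is not
a subterm of `u`; so induction on `u` needs `hS`, which `Tm.IsPure.shiftReduces` discharges. -/
theorem susp_reduces_subst_of_shiftReduces {u : Tm} (hu : u.IsPure) {L : List (Tm × Nat)}
    {nl : Nat} (hS : ∀ p ∈ L, ShiftReduces p.1) (hP : AllPure L) (hL : LevelsBelow L nl) :
    ReflTransGen SR (.susp u L.length nl (Env.ofList L)) (u.subst (envSubst nl L)) := by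
  induction hu generalizing L nl with
  | const c => exact .single (.r1 ..)
  | idx hi => exact susp_idx_reduces hS nl hi
  | app _ _ iha ihb => exact .head (.r5 ..) (reflTransGen_app (iha hS hP hL) (ihb hS hP hL))
  | lam ha ih =>
    have hS' : ∀ p ∈ (Tm.idx 1, nl + 1) :: L, ShiftReduces p.1 :=
      List.forall_mem_cons.2 ⟨fun m => .single (.r2 1 m le_rfl), hS⟩
    refine .head (.r6 ..) (reflTransGen_lam ?_)
    rw [ha.subst_congr fun _ hi => liftSubst_envSubst hP hL hi]
    exact ih hS' ⟨.idx le_rfl, hP⟩ ⟨le_rfl, hL.mono (Nat.le_succ nl)⟩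

theorem Tm.IsPure.shiftReduces {u : Tm} (hu : u.IsPure) : ShiftReduces u := fun m => by
  have := susp_reduces_subst_of_shiftReduces hu (L := []) (nl := m) (by simp) trivial trivial
  rwa [hu.subst_envSubst_nil] at this

theorem Tm.IsPure.susp_reduces_subst {u : Tm} (hu : u.IsPure) {L : List (Tm × Nat)}
    {nl : Nat} (hP : AllPure L) (hL : LevelsBelow L nl) :
    ReflTransGen SR (.susp u L.length nl (Env.ofList L)) (u.subst (envSubst nl L)) :=
  susp_reduces_subst_of_shiftReduces hu (fun _ hp => (hP.isPure_of_mem hp).shiftReduces) hP hL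

theorem merge_reduces_mergeList {L1 L2 : List (Tm × Nat)} {nl1 nl2 : Nat} (hP1 : AllPure L1)
    (hP2 : AllPure L2) (h1 : LevelsBelow L1 nl1) (h2 : LevelsBelow L2 nl2) :
    ReflTransGen SRE (.merge (Env.ofList L1) nl1 L2.length (Env.ofList L2))
      (Env.ofList (mergeList L1 nl1 L2)) := by
  induction L1, nl1, L2 using mergeList.induct generalizing nl2 with
  | case1 L2 => rw [mergeList]; exact .single (.m3 ..)
  | case2 n => rw [mergeList]; exact .single (.m2 ..)
  | case3 n x L2 ih =>
    rw [mergeList]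
    exact .head (.m4 (n + 1) _ x.1 x.2 _ (by omega)) (ih trivial hP2.2 trivial h2.2)
  | case4 p L1 _ => rw [mergeList_nil_right]; exact .single (.m2 ..)
  | case5 t n L1 nl1 s l L2 hlt ih =>
    rw [mergeList, if_pos hlt]
    exact .head (.m5 t n _ nl1 _ s l _ hlt) (ih hP1 hP2.2 ⟨by omega, h1.2⟩ h2.2)
  | case6 t n L1 nl1 s l L2 hlt ih =>
    obtain rfl : n = nl1 := by have := h1.1; omega
    rw [mergeList, if_neg hlt]
    exact .head (.m6 ..) (reflTransGen_econs (hP1.1.susp_reduces_subst hP2 ⟨le_rfl, h2.2⟩)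
      (ih hP1.2 hP2 h1.2 h2) _)

mutual
theorem reduces_evalTm : ∀ {t : Tm}, WfTm t → ReflTransGen SR t (evalTm t)
  | _, .const _ => .refl
  | _, .idx .. => .refl
  | _, .app wa wb => reflTransGen_app (reduces_evalTm wa) (reduces_evalTm wb)
  | _, .lam wa => reflTransGen_lam (reduces_evalTm wa)
  | _, .susp _ _ wt we hlen hlev =>
    have ⟨hP, hL, hlenL⟩ := evalEnv_spec we
    (reflTransGen_susp (reduces_evalTm wt) (reduces_evalEnv we) _ _).trans <| by
      rw [← hlen, ← hlenL]
      exact (isPure_evalTm wt).susp_reduces_subst hP (hL.mono hlev)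
theorem reduces_evalEnv : ∀ {e : Env}, WfEnv e → ReflTransGen SRE e (Env.ofList (evalEnv e))
  | _, .nil => .refl
  | _, .econs _ wt we _ => reflTransGen_econs (reduces_evalTm wt) (reduces_evalEnv we) _
  | _, .merge _ _ we1 we2 hlev1 hlen2 =>
    have ⟨hP1, hL1, _⟩ := evalEnv_spec we1
    have ⟨hP2, hL2, hlenL2⟩ := evalEnv_spec we2
    (reflTransGen_merge (reduces_evalEnv we1) (reduces_evalEnv we2) _ _).trans <| by
      rw [← hlen2, ← hlenL2]
      exact merge_reduces_mergeList hP1 hP2 (hL1.mono hlev1) hL2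
end

theorem confluent_and_unique_normal_form_of_normalizer {α : Type*} {r : α → α → Prop}
    {P : α → Prop} (nf : α → α) (hP : ∀ {x y}, r x y → P x → P y)
    (hinv : ∀ {x y}, r x y → P x → nf x = nf y)
    (hred : ∀ {x}, P x → ReflTransGen r x (nf x))
    (hnorm : ∀ {x}, P x → ∀ y, ¬ r (nf x) y) :
    (∀ s u v, P s → ReflTransGen r s u → ReflTransGen r s v →
        ∃ t, ReflTransGen r u t ∧ ReflTransGen r v t) ∧
    (∀ s, P s → ∃! u, ReflTransGen r s u ∧ ∀ y, ¬ r u y) := by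
  have hsteps : ∀ {s u}, P s → ReflTransGen r s u → P u ∧ nf u = nf s := fun hs h => by
    induction h with
    | refl => exact ⟨hs, rfl⟩
    | tail _ hstep ih => exact ⟨hP hstep ih.1, (hinv hstep ih.1).symm.trans ih.2⟩
  refine ⟨fun s u v hs hu hv => ⟨nf s, ?_, ?_⟩,
    fun s hs => ⟨nf s, ⟨hred hs, hnorm hs⟩, ?_⟩⟩
  · obtain ⟨hPu, hnfu⟩ := hsteps hs hu
    exact hnfu ▸ hred hPu
  · obtain ⟨hPv, hnfv⟩ := hsteps hs hv
    exact hnfv ▸ hred hPv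
  · rintro u ⟨hu, hnu⟩
    obtain ⟨hPu, hnfu⟩ := hsteps hs hu
    rw [← hnfu]
    exact ((reflTransGen_iff_eq hnu).1 (hred hPu)).symm

/-- the reflexive-transitive rewrite relation generated by the
reading and merging rules is confluent on well-formed expressions; in
particular every well-formed suspension expression has a unique normal form
with respect to these rules. -/
theorem rm_confluent_and_unique_normal_forms :
    (∀ s u v : Tm, WfTm s → Relation.ReflTransGen SR s u →
        Relation.ReflTransGen SR s v →
        ∃ t, Relation.ReflTransGen SR u t ∧ Relation.ReflTransGen SR v t) ∧
    (∀ s u v : Env, WfEnv s → Relation.ReflTransGen SRE s u →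
        Relation.ReflTransGen SRE s v →
        ∃ t, Relation.ReflTransGen SRE u t ∧ Relation.ReflTransGen SRE v t) ∧
    (∀ s : Tm, WfTm s → ∃! u, Relation.ReflTransGen SR s u ∧ NormalT u) ∧
    (∀ s : Env, WfEnv s → ∃! u, Relation.ReflTransGen SRE s u ∧ NormalE u) := by
  obtain ⟨confluentTm, normalFormTm⟩ :=
    confluent_and_unique_normal_form_of_normalizer (r := SR) evalTm wfTm_of_SR evalTm_eq_of_SR
      reduces_evalTm fun hs => (isPure_evalTm hs).normalT
  obtain ⟨confluentEnv, normalFormEnv⟩ :=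
    confluent_and_unique_normal_form_of_normalizer (r := SRE) (Env.ofList ∘ evalEnv)
      (fun h we => (wfEnv_len_lev_of_SRE h we).1)
      (fun h we => congrArg Env.ofList (evalEnv_eq_of_SRE h we))
      reduces_evalEnv fun hs => (evalEnv_spec hs).1.normalE
  exact ⟨confluentTm, confluentEnv, normalFormTm, normalFormEnv⟩
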